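/- arXiv:2505.16581 — 2 statements merged into one kernel-verified Lean document; each statement's English description precedes it below -/
import Mathlib

section
/- For any real x ≥ -1/e with x > 0, the principal branch of the Lambert W function satisfies W₀(x) ≤ ln((2x+1)/(1+ln(x+1))). -/
open Real

/-! Put `A = (2x+1)/(1 + log(x+1))`. The tangent-line bound `log t ≤ t - 1` at `t = (x+1)/A`
gives `x = A (1 + log(x+1)) - (x+1) ≤ A log A`, while `x = W e^W = e^W log e^W`. Since
`t ↦ t log t` is increasing on `[1/e, ∞)` and `e^W, A ≥ 1`, this forces `e^W ≤ A`. -/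

namespace Real

lemma mul_one_add_log_sub_le_mul_log {a y : ℝ} (ha : 0 < a) (hy : 0 < y) :
    a * (1 + log y) - y ≤ a * log a := by
  have htangent : log (y / a) ≤ y / a - 1 := log_le_sub_one_of_pos (div_pos hy ha)
  rw [log_div hy.ne' ha.ne'] at htangent
  have hscaled := mul_le_mul_of_nonneg_left htangent ha.le
  rw [mul_sub, mul_sub, mul_one, mul_div_cancel₀ y ha.ne'] at hscaled
  linarith

end Real

theorem lambertW_upper_bound_general (x : ℝ) (hx' : 0 < x)
    (W : ℝ) (hW : W * Real.exp W = x) :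
    W ≤ Real.log ((2 * x + 1) / (1 + Real.log (x + 1))) := by
  set A := (2 * x + 1) / (1 + log (x + 1)) with hA
  have hlog : log (x + 1) ≤ x := by linarith [log_le_sub_one_of_pos (by linarith : 0 < x + 1)]
  have hden : 0 < 1 + log (x + 1) := by linarith [log_nonneg (by linarith : 1 ≤ x + 1)]
  have hA_one : 1 ≤ A := by rw [hA, le_div_iff₀ hden]; linarith
  have hA_pos : 0 < A := by linarith
  have hW_pos : 0 < W := pos_of_mul_pos_left (hW ▸ hx') (exp_pos W).le
  have hx_le : x ≤ A * log A := by
    have hAmul : A * (1 + log (x + 1)) = 2 * x + 1 := div_mul_cancel₀ _ hden.ne'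
    linarith [mul_one_add_log_sub_le_mul_log hA_pos (by linarith : 0 < x + 1)]
  have hexpW_mem : exp W ∈ Set.Ici (exp (-1)) := exp_le_exp.mpr (by linarith)
  have hA_mem : A ∈ Set.Ici (exp (-1)) :=
    (exp_le_one_iff.mpr (by norm_num)).trans hA_one
  rw [le_log_iff_exp_le hA_pos, ← mul_log_strictMonoOn.le_iff_le hexpW_mem hA_mem, log_exp,
    mul_comm, hW]
  exact hx_le

/-- Hoorfar–Hassani upper bound for the principal branch of the Lambert W function:
for `x > 0` (hence `x ≥ -1/e`), if `W` satisfies `W · exp W = x` with `W ≥ -1`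
(which characterises `W = W₀(x)`), then `W ≤ ln((2x+1)/(1+ln(x+1)))`. -/
theorem lambertW_upper_bound (x : ℝ) (hx : -1 / Real.exp 1 ≤ x) (hx' : 0 < x)
    (W : ℝ) (hW : W * Real.exp W = x) (hW' : -1 ≤ W) :
    W ≤ Real.log ((2 * x + 1) / (1 + Real.log (x + 1))) :=
  lambertW_upper_bound_general x hx' W hW
end

section
/- Let X₁, ..., X_N be i.i.d. real random variables with mean m and variance Σ, with X̄ their average, and suppose X̄ is Gaussian. Then for any confidence level ε ∈ (0,1), with probability at least 1 - ε, |m - X̄| ≤ √(Σ/N)·√(W₀(2/(πε²))), where W₀ is the principal branch of the Lambert W function. -/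
/-!
A Gaussian with variance `v` satisfies `P(|X - μ| > c) ≤ √(2/π) (√v / c) exp(-c²/(2v))`:
by symmetry it suffices to bound one tail, and on `(c, ∞)` the density is at most `x / c` times
itself, which has an explicit antiderivative (Mills' ratio). At `c = √v √W` the right-hand side
is `√(2/π) W^(-1/2) exp(-W/2)`, whose square `2 / (π W exp W)` is `ε²` by the equation defining
`W`. When `v = 0` the law is a Dirac mass at the mean and the bound is trivial.
-/

open MeasureTheory ProbabilityTheory Real Filter Topology Set

open scoped NNReal ENNReal

lemma integral_Ioi_mul_exp_neg_mul_sq {b : ℝ} (hb : 0 < b) (c : ℝ) :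
    ∫ x in Ioi c, x * exp (-b * x ^ 2) = exp (-b * c ^ 2) / (2 * b) := by
  have hderiv (x : ℝ) : HasDerivAt (fun x ↦ -(2 * b)⁻¹ * exp (-b * x ^ 2))
      (x * exp (-b * x ^ 2)) x := by
    refine (((hasDerivAt_pow 2 x).const_mul (-b)).exp.const_mul _).congr_deriv ?_
    field_simp
    ring
  have hlim : Tendsto (fun x ↦ -(2 * b)⁻¹ * exp (-b * x ^ 2)) atTop (𝓝 (-(2 * b)⁻¹ * 0)) :=
    (tendsto_exp_atBot.comp ((tendsto_pow_atTop two_ne_zero).const_mul_atTop_of_neg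
      (neg_lt_zero.2 hb))).const_mul _
  rw [integral_Ioi_of_hasDerivAt_of_tendsto' (fun x _ ↦ hderiv x)
    (integrable_mul_exp_neg_mul_sq hb).integrableOn hlim]
  field_simp
  ring

lemma integral_Ioi_exp_neg_mul_sq_le {b c : ℝ} (hb : 0 < b) (hc : 0 < c) :
    ∫ x in Ioi c, exp (-b * x ^ 2) ≤ exp (-b * c ^ 2) / (2 * b * c) := by
  calc ∫ x in Ioi c, exp (-b * x ^ 2)
      ≤ ∫ x in Ioi c, c⁻¹ * (x * exp (-b * x ^ 2)) := by
        refine setIntegral_mono_on (integrable_exp_neg_mul_sq hb).integrableOn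
          ((integrable_mul_exp_neg_mul_sq hb).const_mul _).integrableOn measurableSet_Ioi
          fun x hx ↦ ?_
        rw [← mul_assoc, inv_mul_eq_div]
        exact le_mul_of_one_le_left (exp_pos _).le ((one_le_div hc).2 (le_of_lt hx))
    _ = exp (-b * c ^ 2) / (2 * b * c) := by
        rw [integral_const_mul, integral_Ioi_mul_exp_neg_mul_sq hb]
        field_simp

lemma gaussianReal_Ioi_le {v : ℝ≥0} (hv : v ≠ 0) {c : ℝ} (hc : 0 < c) :
    gaussianReal 0 v (Ioi c) ≤ ENNReal.ofReal (√v / (√(2 * π) * c) * exp (-c ^ 2 / (2 * v))) := by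
  have hb : (0 : ℝ) < (2 * v)⁻¹ := by positivity
  rw [gaussianReal_apply_eq_integral 0 hv]
  refine ENNReal.ofReal_le_ofReal ?_
  calc ∫ x in Ioi c, gaussianPDFReal 0 v x
      = (√(2 * π * v))⁻¹ * ∫ x in Ioi c, exp (-(2 * (v : ℝ))⁻¹ * x ^ 2) := by
        simp_rw [gaussianPDFReal, sub_zero, ← integral_const_mul, neg_div, neg_mul, div_eq_inv_mul]
    _ ≤ (√(2 * π * v))⁻¹ * (exp (-(2 * (v : ℝ))⁻¹ * c ^ 2) / (2 * (2 * (v : ℝ))⁻¹ * c)) :=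
        mul_le_mul_of_nonneg_left (integral_Ioi_exp_neg_mul_sq_le hb hc) (by positivity)
    _ = √v / (√(2 * π) * c) * exp (-c ^ 2 / (2 * v)) := by
        have hsqrt : √(v : ℝ) ^ 2 = v := sq_sqrt v.2
        rw [sqrt_mul (by positivity)]
        field_simp
        rw [hsqrt]

lemma gaussianReal_Iio_neg (v : ℝ≥0) (c : ℝ) :
    gaussianReal 0 v (Iio (-c)) = gaussianReal 0 v (Ioi c) := by
  conv_lhs => rw [← neg_zero, ← gaussianReal_map_neg]
  rw [Measure.map_apply measurable_neg measurableSet_Iio]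
  congr 1
  ext x
  simp

lemma gaussianReal_abs_sub_gt_le (μ : ℝ) {v : ℝ≥0} (hv : v ≠ 0) {c : ℝ} (hc : 0 < c) :
    gaussianReal μ v {x | c < |μ - x|} ≤
      ENNReal.ofReal (√(2 / π) * (√v / c) * exp (-c ^ 2 / (2 * v))) := by
  have hcentre : gaussianReal μ v {x | c < |μ - x|} = gaussianReal 0 v {y | c < |y|} := by
    rw [← sub_self μ, ← gaussianReal_map_const_sub,
      Measure.map_apply (measurable_const_sub μ) (measurableSet_lt measurable_const measurable_abs)]
    rfl
  have hsplit : {y : ℝ | c < |y|} = Iio (-c) ∪ Ioi c := by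
    ext y
    simp only [mem_ofPred_eq, mem_union, mem_Iio, mem_Ioi, lt_abs, lt_neg]
    tauto
  have hmills := gaussianReal_Ioi_le hv hc
  calc gaussianReal μ v {x | c < |μ - x|}
      ≤ gaussianReal 0 v (Iio (-c)) + gaussianReal 0 v (Ioi c) := by
        rw [hcentre, hsplit]
        exact measure_union_le _ _
    _ ≤ ENNReal.ofReal (√v / (√(2 * π) * c) * exp (-c ^ 2 / (2 * v))) +
          ENNReal.ofReal (√v / (√(2 * π) * c) * exp (-c ^ 2 / (2 * v))) := by
        rw [gaussianReal_Iio_neg]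
        exact add_le_add hmills hmills
    _ = ENNReal.ofReal (√(2 / π) * (√v / c) * exp (-c ^ 2 / (2 * v))) := by
        rw [← ENNReal.ofReal_add (by positivity) (by positivity)]
        congr 1
        have : √(2 / π) = 2 / √(2 * π) := by
          rw [eq_div_iff (by positivity), ← sqrt_mul (by positivity),
            show 2 / π * (2 * π) = 2 ^ 2 by field_simp, sqrt_sq zero_le_two]
        rw [this]
        ring

lemma sqrt_two_div_pi_div_sqrt_mul_exp_eq {ε W : ℝ} (hε : 0 < ε) (hW0 : 0 < W)
    (hW : W * exp W = 2 / (π * ε ^ 2)) :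
    √(2 / π) / √W * exp (-W / 2) = ε := by
  refine (sq_eq_sq₀ (by positivity) hε.le).1 ?_
  have hexp : exp (-W / 2) ^ 2 = (exp W)⁻¹ := by
    rw [← exp_nat_mul, ← exp_neg]; ring_nf
  rw [mul_pow, div_pow, sq_sqrt (by positivity), sq_sqrt hW0.le, hexp]
  field_simp at hW ⊢
  linarith

theorem ofReal_one_sub_le_gaussianReal_abs_sub_le (μ : ℝ) (v : ℝ≥0) {ε W : ℝ} (hε : 0 < ε)
    (hW : W * exp W = 2 / (π * ε ^ 2)) :
    ENNReal.ofReal (1 - ε) ≤ gaussianReal μ v {x | |μ - x| ≤ √v * √W} := by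
  have hmeas : MeasurableSet {x : ℝ | |μ - x| ≤ √v * √W} :=
    measurableSet_le (measurable_const_sub μ).abs measurable_const
  by_cases hv : v = 0
  · subst hv
    rw [gaussianReal_zero_var, Measure.dirac_apply_of_mem (by simp)]
    exact ENNReal.ofReal_le_one.2 (by linarith)
  have hW0 : 0 < W := pos_of_mul_pos_left (hW ▸ by positivity) (exp_pos W).le
  have hv0 : (0 : ℝ) < v := by positivity
  have htail := gaussianReal_abs_sub_gt_le μ hv (c := √v * √W) (by positivity)
  rw [mul_pow, sq_sqrt hv0.le, sq_sqrt hW0.le,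
    show √v / (√v * √W) = 1 / √W by field_simp,
    show -(v * W) / (2 * v) = -W / 2 by field_simp, mul_one_div,
    sqrt_two_div_pi_div_sqrt_mul_exp_eq hε hW0 hW] at htail
  have hcompl : {x : ℝ | |μ - x| ≤ √v * √W}ᶜ = {x | √v * √W < |μ - x|} := by
    ext; simp
  calc ENNReal.ofReal (1 - ε) = 1 - ENNReal.ofReal ε := by
        rw [ENNReal.ofReal_sub _ hε.le, ENNReal.ofReal_one]
    _ ≤ 1 - gaussianReal μ v {x | |μ - x| ≤ √v * √W}ᶜ := by
        rw [hcompl]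
        exact tsub_le_tsub_left htail 1
    _ = gaussianReal μ v {x | |μ - x| ≤ √v * √W} := by
        rw [← prob_compl_eq_one_sub hmeas.compl, compl_compl]

theorem gaussian_mc_confidence_bound_general
    {Ω : Type*} [MeasureSpace Ω]
    (N : ℕ) (m : ℝ) (V : NNReal)
    (Xbar : Ω → ℝ)
    (hgauss : Measure.map Xbar ℙ = gaussianReal m (V / N))
    (ε : ℝ) (hε : 0 < ε)
    (W : ℝ) (hW : W * Real.exp W = 2 / (π * ε ^ 2)) :
    ENNReal.ofReal (1 - ε) ≤
      ℙ {ω | |m - Xbar ω| ≤ Real.sqrt ((V : ℝ) / N) * Real.sqrt W} := by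
  have hXbar : AEMeasurable Xbar ℙ :=
    .of_map_ne_zero (hgauss ▸ IsProbabilityMeasure.ne_zero _)
  have hset : MeasurableSet {x : ℝ | |m - x| ≤ √((V / N : ℝ≥0) : ℝ) * √W} :=
    measurableSet_le (measurable_const_sub m).abs measurable_const
  have hbound := ofReal_one_sub_le_gaussianReal_abs_sub_le m (V / N) hε hW
  rwa [← hgauss, Measure.map_apply_of_aemeasurable hXbar hset, NNReal.coe_div,
    NNReal.coe_natCast] at hbound

/-- Confidence bound from inverting the Gaussian tail estimate. Let `X 1, ..., X N` be
i.i.d. real random variables with mean `m` and variance `V`, with average `X̄`, and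
suppose `X̄` is Gaussian (with mean `m` and variance `V/N`). Then for any confidence
level `ε ∈ (0,1)`, with probability at least `1 - ε`,
`|m - X̄| ≤ √(V/N)·√(W₀(2/(πε²)))`, where `W₀` is the principal branch of the Lambert W
function, characterised for positive arguments by `W·exp W = 2/(πε²)`. -/
theorem gaussian_mc_confidence_bound
    {Ω : Type*} [MeasureSpace Ω] [IsProbabilityMeasure (ℙ : Measure Ω)]
    (N : ℕ) (hN : 0 < N) (X : Fin N → Ω → ℝ) (m : ℝ) (V : NNReal)
    (hmeas : ∀ i, Measurable (X i))
    (hindep : iIndepFun X ℙ)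
    (hident : ∀ i j, IdentDistrib (X i) (X j) ℙ ℙ)
    (hmean : ∀ i, ∫ ω, X i ω = m)
    (hvar : ∀ i, variance (X i) ℙ = V)
    (Xbar : Ω → ℝ) (hXbar : Xbar = fun ω => (1 / (N : ℝ)) * ∑ i, X i ω)
    (hgauss : Measure.map Xbar ℙ = gaussianReal m (V / N))
    (ε : ℝ) (hε : 0 < ε) (hε' : ε < 1)
    (W : ℝ) (hW : W * Real.exp W = 2 / (π * ε ^ 2)) :
    ENNReal.ofReal (1 - ε) ≤
      ℙ {ω | |m - Xbar ω| ≤ Real.sqrt ((V : ℝ) / N) * Real.sqrt W} :=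
  gaussian_mc_confidence_bound_general N m V Xbar hgauss ε hε W hW
end
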